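/- Let Γ be the set of subprobabilities on Δ with subuniform marginals and define I(μ) := 1/2 − 2∫_Δ(y−x)dμ + ∫_{Δ²}1[x₁<x₂<y₁<y₂]dμ⊗dμ. Then I(μ) ≥ 0 for all μ ∈ Γ, and I(μ) = 0 if and only if μ = Ω, the uniform measure of mass 1/2 on the segment {(x,1−x): x∈[0,1/2]}. -/

import Mathlib

open MeasureTheory Set
open scoped ENNReal

/-- The triangle `Δ = {(x,y) ∈ [0,1]² : y ≥ x}`. -/
def Tri : Set (ℝ × ℝ) := {p : ℝ × ℝ | 0 ≤ p.1 ∧ p.1 ≤ p.2 ∧ p.2 ≤ 1}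

/-- `Ω`, the uniform measure of mass 1/2 on `{(x,1−x) : x ∈ [0,1/2]}`. -/
noncomputable def OmegaMeas : Measure (ℝ × ℝ) :=
  Measure.map (fun x : ℝ => (x, 1 - x)) (volume.restrict (Set.Icc (0 : ℝ) (1 / 2)))

/-- The entropy functional `I(μ) = 1/2 − 2I₁(μ) + I₂(μ)`. -/
noncomputable def entI (μ : Measure (ℝ × ℝ)) : ℝ :=
  1 / 2 - 2 * (∫ p : ℝ × ℝ, (p.2 - p.1) ∂μ) +
    ((μ.prod μ) {q : (ℝ × ℝ) × (ℝ × ℝ) |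
      q.1.1 < q.2.1 ∧ q.2.1 < q.1.2 ∧ q.1.2 < q.2.2}).toReal

/-! ### Auxiliary lemmas -/

lemma measurableSet_Tri : MeasurableSet Tri := by
  have : Tri = {p : ℝ × ℝ | 0 ≤ p.1} ∩ ({p | p.1 ≤ p.2} ∩ {p | p.2 ≤ 1}) := rfl
  rw [this]
  exact (measurableSet_le measurable_const measurable_fst).inter
    ((measurableSet_le measurable_fst measurable_snd).inter
      (measurableSet_le measurable_snd measurable_const))

/-- the crossing set -/
def Scross : Set ((ℝ × ℝ) × (ℝ × ℝ)) :=
  {q : (ℝ × ℝ) × (ℝ × ℝ) | q.1.1 < q.2.1 ∧ q.2.1 < q.1.2 ∧ q.1.2 < q.2.2}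

lemma measurableSet_Scross : MeasurableSet Scross := by
  exact (measurableSet_lt (measurable_fst.comp measurable_fst)
      (measurable_fst.comp measurable_snd)).inter
    ((measurableSet_lt (measurable_fst.comp measurable_snd)
      (measurable_snd.comp measurable_fst)).inter
    (measurableSet_lt (measurable_snd.comp measurable_fst)
      (measurable_snd.comp measurable_snd)))

/-- the set of points whose interval covers `t` -/
def Cov (t : ℝ) : Set (ℝ × ℝ) := {p : ℝ × ℝ | p.1 < t ∧ t ≤ p.2}

lemma measurableSet_Cov (t : ℝ) : MeasurableSet (Cov t) :=
  (measurableSet_lt measurable_fst measurable_const).inter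
    (measurableSet_le measurable_const measurable_snd)

lemma measurable_Cov (μ : Measure (ℝ × ℝ)) [SFinite μ] :
    Measurable fun t => μ (Cov t) := by
  have hW : MeasurableSet {z : (ℝ × ℝ) × ℝ | z.1.1 < z.2 ∧ z.2 ≤ z.1.2} :=
    (measurableSet_lt (measurable_fst.comp measurable_fst) measurable_snd).inter
      (measurableSet_le measurable_snd (measurable_snd.comp measurable_fst))
  exact measurable_measure_prodMk_right (μ := μ) hW

section Gamma

variable {μ : Measure (ℝ × ℝ)}
  (hsub : μ Set.univ ≤ 1)
  (hsupp : μ Triᶜ = 0)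
  (hx : ∀ a b : ℝ, a ≤ b → μ {p : ℝ × ℝ | a ≤ p.1 ∧ p.1 ≤ b} ≤ ENNReal.ofReal (b - a))
  (hy : ∀ a b : ℝ, a ≤ b → μ {p : ℝ × ℝ | a ≤ p.2 ∧ p.2 ≤ b} ≤ ENNReal.ofReal (b - a))

include hsupp hx in
lemma cov_le_left {t : ℝ} (ht : 0 ≤ t) : μ (Cov t) ≤ ENNReal.ofReal t := by
  have hsubset : Cov t ⊆ Triᶜ ∪ {p : ℝ × ℝ | 0 ≤ p.1 ∧ p.1 ≤ t} := by
    intro p hp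
    by_cases hT : p ∈ Tri
    · exact Or.inr ⟨hT.1, le_of_lt hp.1⟩
    · exact Or.inl hT
  calc μ (Cov t) ≤ μ (Triᶜ ∪ {p : ℝ × ℝ | 0 ≤ p.1 ∧ p.1 ≤ t}) := measure_mono hsubset
    _ ≤ μ Triᶜ + μ {p : ℝ × ℝ | 0 ≤ p.1 ∧ p.1 ≤ t} := measure_union_le _ _
    _ ≤ 0 + ENNReal.ofReal (t - 0) := by
        exact add_le_add (le_of_eq hsupp) (hx 0 t ht)
    _ = ENNReal.ofReal t := by simp

include hsupp hy in
lemma cov_le_right {t : ℝ} (ht : t ≤ 1) : μ (Cov t) ≤ ENNReal.ofReal (1 - t) := by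
  have hsubset : Cov t ⊆ Triᶜ ∪ {p : ℝ × ℝ | t ≤ p.2 ∧ p.2 ≤ 1} := by
    intro p hp
    by_cases hT : p ∈ Tri
    · exact Or.inr ⟨hp.2, hT.2.2⟩
    · exact Or.inl hT
  calc μ (Cov t) ≤ μ (Triᶜ ∪ {p : ℝ × ℝ | t ≤ p.2 ∧ p.2 ≤ 1}) := measure_mono hsubset
    _ ≤ μ Triᶜ + μ {p : ℝ × ℝ | t ≤ p.2 ∧ p.2 ≤ 1} := measure_union_le _ _
    _ ≤ 0 + ENNReal.ofReal (1 - t) := add_le_add (le_of_eq hsupp) (hy t 1 ht)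
    _ = ENNReal.ofReal (1 - t) := by simp

include hsupp in
lemma cov_zero_of_nonpos {t : ℝ} (ht : t ≤ 0) : μ (Cov t) = 0 := by
  have : Cov t ⊆ Triᶜ := by
    intro p hp hT
    exact absurd (lt_of_lt_of_le hp.1 ht) (not_lt.2 hT.1)
  exact le_antisymm (le_trans (measure_mono this) (le_of_eq hsupp)) (zero_le)

include hsupp in
lemma cov_zero_of_gt_one {t : ℝ} (ht : 1 < t) : μ (Cov t) = 0 := by
  have : Cov t ⊆ Triᶜ := by
    intro p hp hT
    exact absurd (lt_of_lt_of_le ht hp.2) (not_lt.2 hT.2.2)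
  exact le_antisymm (le_trans (measure_mono this) (le_of_eq hsupp)) (zero_le)

/-- The layer-cake identity. -/
lemma lintegral_eq_cov (μ : Measure (ℝ × ℝ)) [SFinite μ] :
    ∫⁻ p : ℝ × ℝ, ENNReal.ofReal (p.2 - p.1) ∂μ = ∫⁻ t : ℝ, μ (Cov t) ∂volume := by
  set W : Set ((ℝ × ℝ) × ℝ) := {z : (ℝ × ℝ) × ℝ | z.1.1 < z.2 ∧ z.2 ≤ z.1.2} with hWdef
  have hW : MeasurableSet W :=
    (measurableSet_lt (measurable_fst.comp measurable_fst) measurable_snd).inter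
      (measurableSet_le measurable_snd (measurable_snd.comp measurable_fst))
  have h1 : ∀ p : ℝ × ℝ, ENNReal.ofReal (p.2 - p.1)
      = ∫⁻ t : ℝ, W.indicator 1 (p, t) ∂volume := by
    intro p
    have : ∀ t : ℝ, W.indicator 1 (p, t) = (Ioc p.1 p.2).indicator (1 : ℝ → ℝ≥0∞) t := by
      intro t
      by_cases h : t ∈ Ioc p.1 p.2
      · rw [Set.indicator_of_mem h, Set.indicator_of_mem]
        · rfl
        · exact ⟨h.1, h.2⟩
      · rw [Set.indicator_of_notMem h, Set.indicator_of_notMem]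
        intro hc; exact h ⟨hc.1, hc.2⟩
    simp only [this]
    rw [lintegral_indicator_one measurableSet_Ioc, Real.volume_Ioc]
  have h2 : ∀ t : ℝ, μ (Cov t) = ∫⁻ p : ℝ × ℝ, W.indicator 1 (p, t) ∂μ := by
    intro t
    have : ∀ p : ℝ × ℝ, W.indicator 1 (p, t) = (Cov t).indicator (1 : ℝ × ℝ → ℝ≥0∞) p := by
      intro p
      by_cases h : p ∈ Cov t
      · rw [Set.indicator_of_mem h, Set.indicator_of_mem]
        · rfl
        · exact ⟨h.1, h.2⟩
      · rw [Set.indicator_of_notMem h, Set.indicator_of_notMem]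
        intro hc; exact h ⟨hc.1, hc.2⟩
    simp only [this]
    rw [lintegral_indicator_one (measurableSet_Cov t)]
  simp only [h1]
  rw [lintegral_lintegral_swap]
  · simp only [← h2]
  · exact ((measurable_one.indicator hW).comp measurable_id).aemeasurable

end Gamma

section Gamma2

variable {μ : Measure (ℝ × ℝ)}
  (hsub : μ Set.univ ≤ 1)
  (hsupp : μ Triᶜ = 0)
  (hx : ∀ a b : ℝ, a ≤ b → μ {p : ℝ × ℝ | a ≤ p.1 ∧ p.1 ≤ b} ≤ ENNReal.ofReal (b - a))
  (hy : ∀ a b : ℝ, a ≤ b → μ {p : ℝ × ℝ | a ≤ p.2 ∧ p.2 ≤ b} ≤ ENNReal.ofReal (b - a))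

include hsupp in
lemma lintegral_cov_Ioc :
    ∫⁻ t : ℝ, μ (Cov t) ∂volume = ∫⁻ t in Ioc (0:ℝ) 1, μ (Cov t) ∂volume := by
  rw [← lintegral_indicator measurableSet_Ioc]
  apply lintegral_congr
  intro t
  by_cases h : t ∈ Ioc (0:ℝ) 1
  · rw [Set.indicator_of_mem h]
  · rw [Set.indicator_of_notMem h]
    rcases not_and_or.mp h with h' | h'
    · exact cov_zero_of_nonpos hsupp (le_of_not_gt h')
    · exact cov_zero_of_gt_one hsupp (lt_of_not_ge h')

include hsupp hx hy in
lemma cov_le_min {t : ℝ} (ht : t ∈ Ioc (0:ℝ) 1) :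
    μ (Cov t) ≤ ENNReal.ofReal (min t (1 - t)) := by
  rcases le_total t (1 - t) with h | h
  · rw [min_eq_left h]; exact cov_le_left hsupp hx ht.1.le
  · rw [min_eq_right h]; exact cov_le_right hsupp hy ht.2

lemma lintegral_min_quarter :
    ∫⁻ t in Ioc (0:ℝ) 1, ENNReal.ofReal (min t (1 - t)) ∂volume
      = ENNReal.ofReal (1 / 4) := by
  have hcont : Continuous fun t : ℝ => min t (1 - t) :=
    continuous_id.min (continuous_const.sub continuous_id)
  rw [← ofReal_integral_eq_lintegral_ofReal
      (hcont.integrableOn_Ioc) ?pos]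
  case pos =>
    filter_upwards [ae_restrict_mem measurableSet_Ioc] with t ht
    simp only [Pi.zero_apply]
    have h1 : (0:ℝ) ≤ t := ht.1.le
    have h2 : t ≤ 1 := ht.2
    exact le_min h1 (by linarith)
  congr 1
  rw [← intervalIntegral.integral_of_le (by norm_num : (0:ℝ) ≤ 1)]
  have hsplit := intervalIntegral.integral_add_adjacent_intervals
    (μ := volume) (a := (0:ℝ)) (b := 1/2) (c := 1)
    (hcont.intervalIntegrable _ _) (hcont.intervalIntegrable _ _)
  rw [← hsplit]
  have h1 : ∫ t in (0:ℝ)..(1/2), min t (1 - t) = ∫ t in (0:ℝ)..(1/2), t := by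
    apply intervalIntegral.integral_congr
    intro t ht
    rw [Set.uIcc_of_le (by norm_num : (0:ℝ) ≤ 1/2)] at ht
    exact min_eq_left (by cases ht; linarith)
  have h2 : ∫ t in (1/2:ℝ)..1, min t (1 - t) = ∫ t in (1/2:ℝ)..1, (1 - t) := by
    apply intervalIntegral.integral_congr
    intro t ht
    rw [Set.uIcc_of_le (by norm_num : (1/2:ℝ) ≤ 1)] at ht
    exact min_eq_right (by cases ht; linarith)
  have hid : ∀ a b : ℝ, ∫ t in a..b, t = (b ^ 2 - a ^ 2) / 2 := fun a b =>
    integral_id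
  have hone : ∫ t in (1/2:ℝ)..1, (1:ℝ) = 1/2 := by
    rw [intervalIntegral.integral_const]; norm_num
  have hsub2 : ∫ t in (1/2:ℝ)..1, (1 - t) = 1/8 := by
    rw [intervalIntegral.integral_sub intervalIntegrable_const
      (continuous_id'.intervalIntegrable _ _), hone, hid]
    norm_num
  rw [h1, h2, hid, hsub2]
  norm_num

include hsupp hx hy in
lemma lintegral_le_quarter [SFinite μ] :
    ∫⁻ p : ℝ × ℝ, ENNReal.ofReal (p.2 - p.1) ∂μ ≤ ENNReal.ofReal (1 / 4) := by
  rw [lintegral_eq_cov, lintegral_cov_Ioc hsupp, ← lintegral_min_quarter]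
  apply setLIntegral_mono (by fun_prop)
  intro t ht
  exact cov_le_min hsupp hx hy ht

end Gamma2

lemma ae_eq_of_lintegral_eq {α : Type*} {m : MeasurableSpace α} {ν : Measure α}
    {f g : α → ℝ≥0∞} (hf : Measurable f) (hg : Measurable g)
    (hle : ∀ᵐ x ∂ν, f x ≤ g x) (hfin : ∫⁻ x, g x ∂ν ≠ ⊤)
    (heq : ∫⁻ x, f x ∂ν = ∫⁻ x, g x ∂ν) : ∀ᵐ x ∂ν, f x = g x := by
  have hffin : ∫⁻ x, f x ∂ν ≠ ⊤ := by rw [heq]; exact hfin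
  have hsub : ∫⁻ x, (g x - f x) ∂ν = 0 := by
    rw [lintegral_sub hf hffin hle, heq, tsub_self]
  have h0 : ∀ᵐ x ∂ν, g x - f x = 0 :=
    (lintegral_eq_zero_iff (hg.sub hf)).mp hsub
  filter_upwards [h0, hle] with x h1 h2
  exact le_antisymm h2 (tsub_eq_zero_iff_le.mp h1)

section EqCase

variable {μ : Measure (ℝ × ℝ)}
  (hsupp : μ Triᶜ = 0)
  (hx : ∀ a b : ℝ, a ≤ b → μ {p : ℝ × ℝ | a ≤ p.1 ∧ p.1 ≤ b} ≤ ENNReal.ofReal (b - a))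
  (hy : ∀ a b : ℝ, a ≤ b → μ {p : ℝ × ℝ | a ≤ p.2 ∧ p.2 ≤ b} ≤ ENNReal.ofReal (b - a))

include hsupp in
lemma mu_mono_tri {s t : Set (ℝ × ℝ)} (h : ∀ p, p ∈ Tri → p ∈ s → p ∈ t) :
    μ s ≤ μ t := by
  calc μ s ≤ μ (t ∪ Triᶜ) := measure_mono (fun p hp => by
        by_cases hT : p ∈ Tri
        · exact Or.inl (h p hT hp)
        · exact Or.inr hT)
    _ ≤ μ t + μ Triᶜ := measure_union_le _ _
    _ = μ t := by rw [hsupp, add_zero]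

include hsupp hx in
lemma X_le {t : ℝ} (ht : 0 ≤ t) : μ {p : ℝ × ℝ | p.1 < t} ≤ ENNReal.ofReal t := by
  refine le_trans (mu_mono_tri hsupp (t := {p : ℝ × ℝ | 0 ≤ p.1 ∧ p.1 ≤ t}) ?_) ?_
  · exact fun p hT hp => ⟨hT.1, le_of_lt hp⟩
  · simpa using hx 0 t ht

include hsupp hy in
lemma Y_le {t : ℝ} (ht : t ≤ 1) : μ {p : ℝ × ℝ | t ≤ p.2} ≤ ENNReal.ofReal (1 - t) := by
  refine le_trans (mu_mono_tri hsupp (t := {p : ℝ × ℝ | t ≤ p.2 ∧ p.2 ≤ 1}) ?_) ?_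
  · exact fun p hT hp => ⟨hp, hT.2.2⟩
  · exact hy t 1 ht

/-- The "good parameter" property in the equality case. -/
def GoodT (μ : Measure (ℝ × ℝ)) (t : ℝ) : Prop :=
  t ∈ Ioc (0:ℝ) 1 ∧ μ (Cov t) = ENNReal.ofReal (min t (1 - t))

variable (hcov : ∀ᵐ t ∂(volume.restrict (Ioc (0:ℝ) 1)),
    μ (Cov t) = ENNReal.ofReal (min t (1 - t)))

include hcov in
lemma good_dense_below {t : ℝ} (ht : t ∈ Ioc (0:ℝ) 1) {ε : ℝ} (hε : 0 < ε) :
    ∃ s, GoodT μ s ∧ t - ε < s ∧ s ≤ t := by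
  by_contra hno
  push_neg at hno
  have hbadsub : Ioc (max (t - ε) 0) t ⊆
      {s : ℝ | ¬ (μ (Cov s) = ENNReal.ofReal (min s (1 - s)))} ∩ Ioc (0:ℝ) 1 := by
    intro s hs
    have hs1 : s ∈ Ioc (0:ℝ) 1 :=
      ⟨lt_of_le_of_lt (le_max_right _ _) hs.1, le_trans hs.2 ht.2⟩
    refine ⟨fun hgood => ?_, hs1⟩
    exact absurd hs.2 (hno s ⟨hs1, hgood⟩
      (lt_of_le_of_lt (le_max_left _ _) hs.1)).not_ge
  have h0 : (volume.restrict (Ioc (0:ℝ) 1))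
      {s : ℝ | ¬ (μ (Cov s) = ENNReal.ofReal (min s (1 - s)))} = 0 := hcov
  have hle := Measure.le_restrict_apply (μ := volume) (Ioc (0:ℝ) 1)
      {s : ℝ | ¬ (μ (Cov s) = ENNReal.ofReal (min s (1 - s)))}
  rw [h0] at hle
  have : volume (Ioc (max (t - ε) 0) t) = 0 :=
    le_antisymm (le_trans (measure_mono hbadsub) hle) (zero_le)
  rw [Real.volume_Ioc] at this
  have hlt : max (t - ε) 0 < t := max_lt (by linarith) ht.1
  rw [ENNReal.ofReal_eq_zero] at this
  linarith

include hcov in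
lemma good_dense_above {t : ℝ} (ht : t ∈ Ico (0:ℝ) 1) {ε : ℝ} (hε : 0 < ε) :
    ∃ s, GoodT μ s ∧ t < s ∧ s < t + ε := by
  by_contra hno
  push_neg at hno
  have hbadsub : Ioo t (min (t + ε) 1) ⊆
      {s : ℝ | ¬ (μ (Cov s) = ENNReal.ofReal (min s (1 - s)))} ∩ Ioc (0:ℝ) 1 := by
    intro s hs
    have hs1 : s ∈ Ioc (0:ℝ) 1 :=
      ⟨lt_of_le_of_lt ht.1 hs.1, le_of_lt (lt_of_lt_of_le hs.2 (min_le_right _ _))⟩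
    refine ⟨fun hgood => ?_, hs1⟩
    have := hno s ⟨hs1, hgood⟩ hs.1
    exact absurd (lt_of_lt_of_le hs.2 (min_le_left _ _)) this.not_gt
  have h0 : (volume.restrict (Ioc (0:ℝ) 1))
      {s : ℝ | ¬ (μ (Cov s) = ENNReal.ofReal (min s (1 - s)))} = 0 := hcov
  have hle := Measure.le_restrict_apply (μ := volume) (Ioc (0:ℝ) 1)
      {s : ℝ | ¬ (μ (Cov s) = ENNReal.ofReal (min s (1 - s)))}
  rw [h0] at hle
  have : volume (Ioo t (min (t + ε) 1)) = 0 :=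
    le_antisymm (le_trans (measure_mono hbadsub) hle) (zero_le)
  rw [Real.volume_Ioo] at this
  have hlt : t < min (t + ε) 1 := lt_min (by linarith) ht.2
  rw [ENNReal.ofReal_eq_zero] at this
  linarith

include hsupp hx hcov in
lemma X_eq {t : ℝ} (ht : t ∈ Icc (0:ℝ) (1/2)) :
    μ {p : ℝ × ℝ | p.1 < t} = ENNReal.ofReal t := by
  rcases eq_or_lt_of_le ht.1 with h0 | h0
  · rw [← h0]
    refine le_antisymm ?_ (by simp)
    simpa using X_le hsupp hx (le_refl (0:ℝ))
  refine le_antisymm (X_le hsupp hx ht.1) ?_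
  by_contra hlt
  push_neg at hlt
  set A := μ {p : ℝ × ℝ | p.1 < t} with hA
  have hAfin : A ≠ ⊤ := (lt_of_lt_of_le hlt le_top).ne
  have hAtop : A.toReal < t := by
    have := ENNReal.toReal_lt_toReal hAfin ENNReal.ofReal_ne_top |>.2 hlt
    rwa [ENNReal.toReal_ofReal ht.1] at this
  obtain ⟨s, hgood, hs1, hs2⟩ := good_dense_below hcov
    ⟨h0, le_trans ht.2 (by norm_num)⟩ (sub_pos.2 hAtop)
  have hspos : 0 < s := hgood.1.1
  have hmin : min s (1 - s) = s := min_eq_left (by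
    have := le_trans hs2 ht.2; linarith)
  have hC : μ (Cov s) = ENNReal.ofReal s := by rw [hgood.2, hmin]
  have hsub : Cov s ⊆ {p : ℝ × ℝ | p.1 < t} := fun p hp => lt_of_lt_of_le hp.1 hs2
  have hge : ENNReal.ofReal s ≤ A := hC ▸ measure_mono hsub
  have hlt2 : A < ENNReal.ofReal s := by
    calc A = ENNReal.ofReal A.toReal := (ENNReal.ofReal_toReal hAfin).symm
      _ < ENNReal.ofReal s := (ENNReal.ofReal_lt_ofReal_iff hspos).2 (by linarith)
  exact absurd hge hlt2.not_ge

include hsupp hx hcov in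
lemma Ylow_null : μ {p : ℝ × ℝ | p.2 < 1/2} = 0 := by
  have key : ∀ s : ℝ, GoodT μ s → s ≤ 1/2 → μ {p : ℝ × ℝ | p.2 < s} = 0 := by
    intro s hgood hs
    have hspos : 0 < s := hgood.1.1
    have hmin : min s (1 - s) = s := min_eq_left (by linarith)
    have hC : μ (Cov s) = ENNReal.ofReal s := by rw [hgood.2, hmin]
    have hXle : μ {p : ℝ × ℝ | p.1 < s} ≤ ENNReal.ofReal s := X_le hsupp hx hspos.le
    have hsub : Cov s ⊆ {p : ℝ × ℝ | p.1 < s} := fun p hp => hp.1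
    have hdiff : μ ({p : ℝ × ℝ | p.1 < s} \ Cov s) = 0 := by
      rw [measure_diff hsub (measurableSet_Cov s).nullMeasurableSet
        (by rw [hC]; exact ENNReal.ofReal_ne_top)]
      rw [hC]
      exact tsub_eq_zero_iff_le.2 hXle
    refine le_antisymm (le_trans (mu_mono_tri hsupp ?_) (le_of_eq hdiff)) (zero_le)
    intro p hT hp
    exact ⟨lt_of_le_of_lt hT.2.1 hp, fun hc => absurd (lt_of_le_of_lt hc.2 hp) (lt_irrefl _)⟩
  have hsub : {p : ℝ × ℝ | p.2 < 1/2} ⊆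
      ⋃ n : ℕ, {p : ℝ × ℝ | p.2 ≤ 1/2 - 1/(n+1)} := by
    intro p hp
    have hp' : p.2 < 1/2 := hp
    obtain ⟨n, hn⟩ := exists_nat_one_div_lt (show (0:ℝ) < 1/2 - p.2 by linarith)
    exact mem_iUnion.2 ⟨n, show p.2 ≤ 1/2 - 1/((n:ℝ)+1) by linarith⟩
  refine le_antisymm (le_trans (measure_mono hsub) (le_of_eq ?_)) (zero_le)
  refine measure_iUnion_null fun n => ?_
  obtain ⟨s, hgood, hs1, hs2⟩ := good_dense_below hcov
    (by norm_num : (1/2:ℝ) ∈ Ioc (0:ℝ) 1) (by positivity : (0:ℝ) < 1/(n+1))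
  refine measure_mono_null (fun p hp => ?_) (key s hgood hs2)
  have : p.2 ≤ 1/2 - 1/(n+1) := hp
  exact lt_of_le_of_lt this (by linarith)

include hsupp hy hcov in
lemma Y_eq {t : ℝ} (ht : t ∈ Icc (1/2:ℝ) 1) :
    μ {p : ℝ × ℝ | t ≤ p.2} = ENNReal.ofReal (1 - t) := by
  rcases eq_or_lt_of_le ht.2 with h1 | h1
  · rw [h1]
    refine le_antisymm ?_ (by simp)
    simpa using Y_le hsupp hy (le_refl (1:ℝ))
  refine le_antisymm (Y_le hsupp hy ht.2) ?_
  by_contra hlt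
  push_neg at hlt
  set A := μ {p : ℝ × ℝ | t ≤ p.2} with hA
  have hAfin : A ≠ ⊤ := (lt_of_lt_of_le hlt le_top).ne
  have hAtop : A.toReal < 1 - t := by
    have := ENNReal.toReal_lt_toReal hAfin ENNReal.ofReal_ne_top |>.2 hlt
    rwa [ENNReal.toReal_ofReal (by linarith : (0:ℝ) ≤ 1 - t)] at this
  obtain ⟨s, hgood, hs1, hs2⟩ := good_dense_above hcov
    ⟨by linarith [ht.1], h1⟩ (show (0:ℝ) < 1 - t - A.toReal by linarith)
  have hs12 : 1/2 ≤ s := le_of_lt (lt_of_le_of_lt ht.1 hs1)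
  have hmin : min s (1 - s) = 1 - s := min_eq_right (by linarith)
  have hC : μ (Cov s) = ENNReal.ofReal (1 - s) := by rw [hgood.2, hmin]
  have hsub : Cov s ⊆ {p : ℝ × ℝ | t ≤ p.2} := fun p hp =>
    le_trans (le_of_lt hs1) hp.2
  have hge : ENNReal.ofReal (1 - s) ≤ A := hC ▸ measure_mono hsub
  have hpos : (0:ℝ) < 1 - s := lt_of_le_of_lt ENNReal.toReal_nonneg (by linarith)
  have hlt2 : A < ENNReal.ofReal (1 - s) := by
    calc A = ENNReal.ofReal A.toReal := (ENNReal.ofReal_toReal hAfin).symm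
      _ < ENNReal.ofReal (1 - s) := (ENNReal.ofReal_lt_ofReal_iff hpos).2 (by linarith)
  exact absurd hge hlt2.not_ge

include hsupp hy hcov in
lemma Xhigh_null : μ {p : ℝ × ℝ | 1/2 < p.1} = 0 := by
  have key : ∀ s : ℝ, GoodT μ s → 1/2 ≤ s → μ {p : ℝ × ℝ | s ≤ p.1} = 0 := by
    intro s hgood hs
    have hs1 : s ≤ 1 := hgood.1.2
    have hmin : min s (1 - s) = 1 - s := min_eq_right (by linarith)
    have hC : μ (Cov s) = ENNReal.ofReal (1 - s) := by rw [hgood.2, hmin]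
    have hYle : μ {p : ℝ × ℝ | s ≤ p.2} ≤ ENNReal.ofReal (1 - s) := Y_le hsupp hy hs1
    have hsub : Cov s ⊆ {p : ℝ × ℝ | s ≤ p.2} := fun p hp => hp.2
    have hdiff : μ ({p : ℝ × ℝ | s ≤ p.2} \ Cov s) = 0 := by
      rw [measure_diff hsub (measurableSet_Cov s).nullMeasurableSet
        (by rw [hC]; exact ENNReal.ofReal_ne_top), hC]
      exact tsub_eq_zero_iff_le.2 hYle
    refine le_antisymm (le_trans (mu_mono_tri hsupp ?_) (le_of_eq hdiff)) (zero_le)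
    intro p hT hp
    exact ⟨le_trans hp hT.2.1, fun hc => absurd (lt_of_lt_of_le hc.1 hp) (lt_irrefl _)⟩
  have hsub : {p : ℝ × ℝ | 1/2 < p.1} ⊆
      ⋃ n : ℕ, {p : ℝ × ℝ | 1/2 + 1/((n:ℝ)+1) ≤ p.1} := by
    intro p hp
    have hp' : 1/2 < p.1 := hp
    obtain ⟨n, hn⟩ := exists_nat_one_div_lt (show (0:ℝ) < p.1 - 1/2 by linarith)
    exact mem_iUnion.2 ⟨n, show 1/2 + 1/((n:ℝ)+1) ≤ p.1 by linarith⟩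
  refine le_antisymm (le_trans (measure_mono hsub) (le_of_eq ?_)) (zero_le)
  refine measure_iUnion_null fun n => ?_
  obtain ⟨s, hgood, hs1, hs2⟩ := good_dense_above hcov
    (by norm_num : (1/2:ℝ) ∈ Ico (0:ℝ) 1) (by positivity : (0:ℝ) < 1/((n:ℝ)+1))
  refine measure_mono_null (fun p hp => ?_) (key s hgood hs1.le)
  have : 1/2 + 1/((n:ℝ)+1) ≤ p.1 := hp
  exact le_trans (le_of_lt hs2) this

end EqCase

section CrossNull

variable {μ : Measure (ℝ × ℝ)} [IsFiniteMeasure μ]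
  (hsupp : μ Triᶜ = 0)
  (hx : ∀ a b : ℝ, a ≤ b → μ {p : ℝ × ℝ | a ≤ p.1 ∧ p.1 ≤ b} ≤ ENNReal.ofReal (b - a))
  (hy : ∀ a b : ℝ, a ≤ b → μ {p : ℝ × ℝ | a ≤ p.2 ∧ p.2 ≤ b} ≤ ENNReal.ofReal (b - a))
  (hXeq : ∀ t ∈ Icc (0:ℝ) (1/2), μ {p : ℝ × ℝ | p.1 < t} = ENNReal.ofReal t)
  (hYeq : ∀ t ∈ Icc (1/2:ℝ) 1, μ {p : ℝ × ℝ | t ≤ p.2} = ENNReal.ofReal (1 - t))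
  (hYlow : μ {p : ℝ × ℝ | p.2 < 1/2} = 0)
  (hXhigh : μ {p : ℝ × ℝ | 1/2 < p.1} = 0)
  (hI2 : (μ.prod μ) Scross = 0)

/-- lower-left corner set -/
def CA (c : ℝ) : Set (ℝ × ℝ) := {p : ℝ × ℝ | p.1 < c ∧ p.2 < 1 - c}
/-- upper-right corner set -/
def CB (c : ℝ) : Set (ℝ × ℝ) := {p : ℝ × ℝ | c ≤ p.1 ∧ 1 - c ≤ p.2}

lemma measurableSet_CA (c : ℝ) : MeasurableSet (CA c) :=
  (measurableSet_lt measurable_fst measurable_const).inter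
    (measurableSet_lt measurable_snd measurable_const)

lemma measurableSet_CB (c : ℝ) : MeasurableSet (CB c) :=
  (measurableSet_le measurable_const measurable_fst).inter
    (measurableSet_le measurable_const measurable_snd)

include hx hy hXeq hYeq hYlow hXhigh hI2 in
lemma corner_null {c : ℝ} (hc : c ∈ Ioo (0:ℝ) (1/2)) :
    μ (CA c) = 0 ∧ μ (CB c) = 0 := by
  set M : Set (ℝ × ℝ) := {p : ℝ × ℝ | p.1 < c ∧ 1 - c ≤ p.2} with hM
  have hMmeas : MeasurableSet M :=
    (measurableSet_lt measurable_fst measurable_const).inter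
      (measurableSet_le measurable_const measurable_snd)
  have hAM : CA c ∪ M = {p : ℝ × ℝ | p.1 < c} := by
    ext p
    constructor
    · rintro (h | h) <;> exact h.1
    · intro h
      rcases lt_or_ge p.2 (1 - c) with h2 | h2
      · exact Or.inl ⟨h, h2⟩
      · exact Or.inr ⟨h, h2⟩
  have hMB : M ∪ CB c = {p : ℝ × ℝ | 1 - c ≤ p.2} := by
    ext p
    constructor
    · rintro (h | h) <;> exact h.2
    · intro h
      rcases lt_or_ge p.1 c with h2 | h2
      · exact Or.inl ⟨h2, h⟩
      · exact Or.inr ⟨h2, h⟩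
  have hdisj1 : Disjoint (CA c) M := by
    rw [Set.disjoint_left]
    rintro p ⟨_, h1⟩ ⟨_, h2⟩
    exact absurd (lt_of_le_of_lt h2 h1) (lt_irrefl _)
  have hdisj2 : Disjoint M (CB c) := by
    rw [Set.disjoint_left]
    rintro p ⟨h1, _⟩ ⟨h2, _⟩
    exact absurd (lt_of_le_of_lt h2 h1) (lt_irrefl _)
  have e1 : μ (CA c) + μ M = ENNReal.ofReal c := by
    rw [← measure_union hdisj1 hMmeas, hAM]
    exact hXeq c ⟨hc.1.le, hc.2.le⟩
  have e2 : μ M + μ (CB c) = ENNReal.ofReal c := by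
    rw [← measure_union hdisj2 (measurableSet_CB c), hMB]
    rw [hYeq (1 - c) ⟨by linarith [hc.2], by linarith [hc.1]⟩]
    ring_nf
  have hMfin : μ M ≠ ⊤ := measure_ne_top μ M
  have hABeq : μ (CA c) = μ (CB c) := by
    have h : μ (CA c) + μ M = μ (CB c) + μ M := by
      calc μ (CA c) + μ M = ENNReal.ofReal c := e1
        _ = μ M + μ (CB c) := e2.symm
        _ = μ (CB c) + μ M := add_comm _ _
    exact (ENNReal.add_left_inj hMfin).mp h
  -- refined sets
  set A' : Set (ℝ × ℝ) := CA c ∩ {p : ℝ × ℝ | 1/2 < p.2} with hA'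
  set B' : Set (ℝ × ℝ) := CB c ∩ {p : ℝ × ℝ | p.1 < 1/2} with hB'
  have hA'meas : MeasurableSet A' :=
    (measurableSet_CA c).inter (measurableSet_lt measurable_const measurable_snd)
  have hB'meas : MeasurableSet B' :=
    (measurableSet_CB c).inter (measurableSet_lt measurable_fst measurable_const)
  have hAA' : μ (CA c) = μ A' := by
    refine le_antisymm ?_ (measure_mono inter_subset_left)
    calc μ (CA c) ≤ μ (A' ∪ ({p : ℝ × ℝ | p.2 < 1/2} ∪ {p : ℝ × ℝ | p.2 = 1/2})) := by
          apply measure_mono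
          intro p hp
          rcases lt_trichotomy p.2 (1/2 : ℝ) with h | h | h
          · exact Or.inr (Or.inl h)
          · exact Or.inr (Or.inr h)
          · exact Or.inl ⟨hp, h⟩
      _ ≤ μ A' + (μ {p : ℝ × ℝ | p.2 < 1/2} + μ {p : ℝ × ℝ | p.2 = 1/2}) := by
          exact le_trans (measure_union_le _ _) (by gcongr; exact measure_union_le _ _)
      _ = μ A' := by
          have h0 : μ {p : ℝ × ℝ | 1/2 ≤ p.2 ∧ p.2 ≤ 1/2} = 0 := by
            have := hy (1/2) (1/2) le_rfl
            simpa using this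
          have h2 : μ {p : ℝ × ℝ | p.2 = 1/2} = 0 :=
            le_antisymm (le_trans (measure_mono (by
              intro p hp
              simp only [mem_setOf_eq] at hp ⊢
              exact ⟨le_of_eq hp.symm, le_of_eq hp⟩)) (le_of_eq h0)) (zero_le)
          rw [hYlow, h2, add_zero, add_zero]
  have hBB' : μ (CB c) = μ B' := by
    refine le_antisymm ?_ (measure_mono inter_subset_left)
    calc μ (CB c) ≤ μ (B' ∪ ({p : ℝ × ℝ | 1/2 < p.1} ∪ {p : ℝ × ℝ | p.1 = 1/2})) := by
          apply measure_mono
          intro p hp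
          rcases lt_trichotomy p.1 (1/2 : ℝ) with h | h | h
          · exact Or.inl ⟨hp, h⟩
          · exact Or.inr (Or.inr h)
          · exact Or.inr (Or.inl h)
      _ ≤ μ B' + (μ {p : ℝ × ℝ | 1/2 < p.1} + μ {p : ℝ × ℝ | p.1 = 1/2}) := by
          exact le_trans (measure_union_le _ _) (by gcongr; exact measure_union_le _ _)
      _ = μ B' := by
          have h0 : μ {p : ℝ × ℝ | 1/2 ≤ p.1 ∧ p.1 ≤ 1/2} = 0 := by
            have := hx (1/2) (1/2) le_rfl
            simpa using this
          have h2 : μ {p : ℝ × ℝ | p.1 = 1/2} = 0 :=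
            le_antisymm (le_trans (measure_mono (by
              intro p hp
              simp only [mem_setOf_eq] at hp ⊢
              exact ⟨le_of_eq hp.symm, le_of_eq hp⟩)) (le_of_eq h0)) (zero_le)
          rw [hXhigh, h2, add_zero, add_zero]
  -- the product of the refined sets consists of crossing pairs
  have hprod : A' ×ˢ B' ⊆ Scross := by
    rintro ⟨p, q⟩ ⟨⟨⟨hp1, hp2⟩, hp3⟩, ⟨⟨hq1, hq2⟩, hq3⟩⟩
    exact ⟨lt_of_lt_of_le hp1 hq1, lt_trans hq3 hp3, lt_of_lt_of_le hp2 hq2⟩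
  have hzero : μ A' * μ B' = 0 := by
    have := measure_mono_null hprod hI2
    rwa [Measure.prod_prod] at this
  have hA0 : μ (CA c) = 0 := by
    rcases mul_eq_zero.mp hzero with h | h
    · rw [hAA', h]
    · rw [hABeq, hBB', h]
  exact ⟨hA0, by rw [← hABeq]; exact hA0⟩

end CrossNull

section Final

variable {μ : Measure (ℝ × ℝ)} [IsFiniteMeasure μ]
  (hsupp : μ Triᶜ = 0)
  (hx : ∀ a b : ℝ, a ≤ b → μ {p : ℝ × ℝ | a ≤ p.1 ∧ p.1 ≤ b} ≤ ENNReal.ofReal (b - a))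
  (hYlow : μ {p : ℝ × ℝ | p.2 < 1/2} = 0)
  (hXhigh : μ {p : ℝ × ℝ | 1/2 < p.1} = 0)
  (hXeq : ∀ t ∈ Icc (0:ℝ) (1/2), μ {p : ℝ × ℝ | p.1 < t} = ENNReal.ofReal t)
  (hcorner : ∀ c : ℝ, c ∈ Ioo (0:ℝ) (1/2) → μ (CA c) = 0 ∧ μ (CB c) = 0)

include hsupp hYlow hXhigh hcorner in
lemma graph_ae : ∀ᵐ p ∂μ, p.2 = 1 - p.1 := by
  have hN : μ (Triᶜ ∪ ({p : ℝ × ℝ | p.2 < 1/2} ∪ ({p : ℝ × ℝ | 1/2 < p.1} ∪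
      ⋃ q : ℚ, (if (0 < (q:ℝ) ∧ (q:ℝ) < 1/2) then CA (q:ℝ) ∪ CB (q:ℝ) else ∅)))) = 0 := by
    refine measure_union_null hsupp (measure_union_null hYlow (measure_union_null hXhigh ?_))
    refine measure_iUnion_null fun q => ?_
    split_ifs with h
    · exact measure_union_null (hcorner q ⟨h.1, h.2⟩).1 (hcorner q ⟨h.1, h.2⟩).2
    · simp
  rw [ae_iff]
  refine measure_mono_null ?_ hN
  intro p hp
  simp only [mem_setOf_eq] at hp
  by_cases hT : p ∈ Tri
  swap
  · exact Or.inl hT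
  right
  by_cases hy2 : p.2 < 1/2
  · exact Or.inl hy2
  right
  by_cases hx2 : 1/2 < p.1
  · exact Or.inl hx2
  right
  push_neg at hy2 hx2
  rcases lt_or_gt_of_ne hp with hlt | hgt
  · have h1 : p.1 < 1 - p.2 := by linarith
    obtain ⟨q, hq1, hq2⟩ := exists_rat_btwn h1
    refine mem_iUnion.2 ⟨q, ?_⟩
    have hq0 : 0 < (q:ℝ) := lt_of_le_of_lt hT.1 hq1
    have hqh : (q:ℝ) < 1/2 := by linarith
    rw [if_pos ⟨hq0, hqh⟩]
    exact Or.inl ⟨hq1, by linarith⟩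
  · have h1 : 1 - p.2 < p.1 := by linarith
    obtain ⟨q, hq1, hq2⟩ := exists_rat_btwn h1
    refine mem_iUnion.2 ⟨q, ?_⟩
    have h2 : p.2 ≤ 1 := hT.2.2
    have hq0 : 0 < (q:ℝ) := by linarith
    have hqh : (q:ℝ) < 1/2 := by linarith
    rw [if_pos ⟨hq0, hqh⟩]
    exact Or.inr ⟨le_of_lt hq2, by linarith⟩

include hx hXeq hXhigh in
lemma mass_univ : μ Set.univ = ENNReal.ofReal (1/2) := by
  have hxeq : μ {p : ℝ × ℝ | p.1 = 1/2} = 0 := by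
    have h0 : μ {p : ℝ × ℝ | 1/2 ≤ p.1 ∧ p.1 ≤ 1/2} = 0 := by
      have := hx (1/2) (1/2) le_rfl
      simpa using this
    refine le_antisymm (le_trans (measure_mono (by
      intro p hp
      simp only [mem_setOf_eq] at hp ⊢
      exact ⟨le_of_eq hp.symm, le_of_eq hp⟩)) (le_of_eq h0)) (zero_le)
  refine le_antisymm ?_ ?_
  · calc μ Set.univ ≤ μ ({p : ℝ × ℝ | p.1 < 1/2} ∪ ({p : ℝ × ℝ | p.1 = 1/2} ∪
        {p : ℝ × ℝ | 1/2 < p.1})) := by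
          apply measure_mono
          intro p _
          rcases lt_trichotomy p.1 (1/2:ℝ) with h | h | h
          · exact Or.inl h
          · exact Or.inr (Or.inl h)
          · exact Or.inr (Or.inr h)
      _ ≤ μ {p : ℝ × ℝ | p.1 < 1/2} + (μ {p : ℝ × ℝ | p.1 = 1/2} +
          μ {p : ℝ × ℝ | 1/2 < p.1}) :=
        le_trans (measure_union_le _ _) (by gcongr; exact measure_union_le _ _)
      _ = ENNReal.ofReal (1/2) := by
          rw [hXeq (1/2) ⟨by norm_num, le_rfl⟩, hxeq, hXhigh, add_zero, add_zero]
  · rw [← hXeq (1/2) ⟨by norm_num, le_rfl⟩]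
    exact measure_mono (subset_univ _)

include hsupp hx hXeq hXhigh in
lemma fst_marginal : Measure.map Prod.fst μ = volume.restrict (Icc (0:ℝ) (1/2)) := by
  have : IsFiniteMeasure (Measure.map Prod.fst μ) := by
    constructor
    rw [Measure.map_apply measurable_fst MeasurableSet.univ]
    exact measure_lt_top μ _
  refine Measure.ext_of_Iic _ _ (fun a => ?_)
  rw [Measure.map_apply measurable_fst measurableSet_Iic,
    Measure.restrict_apply measurableSet_Iic]
  rcases lt_or_ge a 0 with ha | ha
  · have h1 : μ (Prod.fst ⁻¹' Iic a) = 0 := by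
      refine le_antisymm (le_trans (measure_mono ?_) (le_of_eq hsupp)) (zero_le)
      intro p hp hT
      exact absurd (le_trans hT.1 hp) (not_le.2 ha)
    have h2 : Iic a ∩ Icc (0:ℝ) (1/2) = ∅ := by
      apply eq_empty_of_forall_notMem
      rintro t ⟨h1, h2, _⟩
      exact absurd (le_trans h2 h1) (not_le.2 ha)
    rw [h1, h2]
    simp
  rcases le_or_gt a (1/2) with ha2 | ha2
  · have hxa : μ {p : ℝ × ℝ | p.1 = a} = 0 := by
      have h0 : μ {p : ℝ × ℝ | a ≤ p.1 ∧ p.1 ≤ a} = 0 := by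
        have := hx a a le_rfl
        simpa using this
      refine le_antisymm (le_trans (measure_mono (by
        intro p hp
        simp only [mem_setOf_eq] at hp ⊢
        exact ⟨le_of_eq hp.symm, le_of_eq hp⟩)) (le_of_eq h0)) (zero_le)
    have h1 : μ (Prod.fst ⁻¹' Iic a) = ENNReal.ofReal a := by
      refine le_antisymm ?_ ?_
      · calc μ (Prod.fst ⁻¹' Iic a)
            ≤ μ ({p : ℝ × ℝ | p.1 < a} ∪ {p : ℝ × ℝ | p.1 = a}) := by
              apply measure_mono
              intro p hp
              rcases lt_or_eq_of_le (show p.1 ≤ a from hp) with h | h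
              · exact Or.inl h
              · exact Or.inr h
          _ ≤ μ {p : ℝ × ℝ | p.1 < a} + μ {p : ℝ × ℝ | p.1 = a} := measure_union_le _ _
          _ = ENNReal.ofReal a := by rw [hXeq a ⟨ha, ha2⟩, hxa, add_zero]
      · rw [← hXeq a ⟨ha, ha2⟩]
        exact measure_mono (fun p hp => show p.1 ≤ a from le_of_lt hp)
    have h2 : Iic a ∩ Icc (0:ℝ) (1/2) = Icc 0 a := by
      ext t
      simp only [mem_inter_iff, mem_Iic, mem_Icc]
      constructor
      · rintro ⟨u, v, _⟩; exact ⟨v, u⟩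
      · rintro ⟨u, v⟩; exact ⟨v, u, le_trans v ha2⟩
    rw [h1, h2, Real.volume_Icc]
    norm_num
  · have h1 : μ (Prod.fst ⁻¹' Iic a) = ENNReal.ofReal (1/2) := by
      rw [← mass_univ hx hXhigh hXeq]
      refine le_antisymm (measure_mono (subset_univ _)) ?_
      calc μ Set.univ ≤ μ (Prod.fst ⁻¹' Iic a ∪ {p : ℝ × ℝ | 1/2 < p.1}) := by
            apply measure_mono
            intro p _
            rcases le_or_gt p.1 a with h | h
            · exact Or.inl h
            · exact Or.inr (lt_trans ha2 h)
        _ ≤ μ (Prod.fst ⁻¹' Iic a) + μ {p : ℝ × ℝ | 1/2 < p.1} := measure_union_le _ _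
        _ = μ (Prod.fst ⁻¹' Iic a) := by rw [hXhigh, add_zero]
    have h2 : Iic a ∩ Icc (0:ℝ) (1/2) = Icc 0 (1/2) := by
      ext t
      simp only [mem_inter_iff, mem_Iic, mem_Icc]
      exact ⟨fun h => h.2, fun h => ⟨le_trans h.2 ha2.le, h⟩⟩
    rw [h1, h2, Real.volume_Icc]
    norm_num

include hsupp hx hXeq hXhigh in
lemma eq_omega (hgraph : ∀ᵐ p ∂μ, p.2 = 1 - p.1) : μ = OmegaMeas := by
  have hmap : μ = Measure.map (fun p : ℝ × ℝ => (p.1, 1 - p.1)) μ := by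
    conv_lhs => rw [← Measure.map_id (μ := μ)]
    apply Measure.map_congr
    filter_upwards [hgraph] with p hp
    show id p = (p.1, 1 - p.1)
    rw [id_eq, ← hp]
  rw [hmap,
    show (fun p : ℝ × ℝ => (p.1, 1 - p.1)) = (fun x : ℝ => (x, 1 - x)) ∘ Prod.fst from rfl,
    ← Measure.map_map (by fun_prop) measurable_fst,
    fst_marginal hsupp hx hXhigh hXeq]
  rfl

end Final

section Omega

lemma omega_integral : ∫ p : ℝ × ℝ, (p.2 - p.1) ∂OmegaMeas = 1/4 := by
  rw [OmegaMeas, integral_map (by fun_prop : AEMeasurable (fun x : ℝ => (x, 1 - x)) _)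
    (f := fun p : ℝ × ℝ => p.2 - p.1) (continuous_snd.sub continuous_fst).aestronglyMeasurable]
  have : ∀ x : ℝ, ((fun x : ℝ => (x, 1 - x)) x).2 - ((fun x : ℝ => (x, 1 - x)) x).1
      = 1 - 2 * x := by intro x; simp; ring
  simp only [this]
  rw [integral_Icc_eq_integral_Ioc, ← intervalIntegral.integral_of_le (by norm_num : (0:ℝ) ≤ 1/2)]
  rw [intervalIntegral.integral_sub intervalIntegrable_const
    (IntervalIntegrable.const_mul (continuous_id'.intervalIntegrable _ _) 2)]
  rw [intervalIntegral.integral_const_mul]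
  have hid : ∫ t in (0:ℝ)..(1/2), t = ((1/2:ℝ) ^ 2 - 0 ^ 2) / 2 := integral_id
  rw [hid, intervalIntegral.integral_const]
  norm_num

instance : IsFiniteMeasure OmegaMeas := by
  constructor
  rw [OmegaMeas, Measure.map_apply (by fun_prop) MeasurableSet.univ]
  simp only [preimage_univ, Measure.restrict_apply MeasurableSet.univ, univ_inter,
    Real.volume_Icc]
  exact ENNReal.ofReal_lt_top

lemma omega_graph : OmegaMeas {p : ℝ × ℝ | p.2 = 1 - p.1}ᶜ = 0 := by
  have hG : MeasurableSet {p : ℝ × ℝ | p.2 = 1 - p.1} :=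
    (isClosed_eq continuous_snd (continuous_const.sub continuous_fst)).measurableSet
  rw [OmegaMeas, Measure.map_apply (by fun_prop) hG.compl]
  have : (fun x : ℝ => (x, 1 - x)) ⁻¹' {p : ℝ × ℝ | p.2 = 1 - p.1}ᶜ = ∅ := by
    apply eq_empty_of_forall_notMem
    intro x hx
    exact hx rfl
  rw [this]
  simp

lemma omega_cross : (OmegaMeas.prod OmegaMeas) Scross = 0 := by
  set G : Set (ℝ × ℝ) := {p : ℝ × ℝ | p.2 = 1 - p.1} with hGdef
  have hsub : Scross ⊆ (Gᶜ ×ˢ (univ : Set (ℝ × ℝ))) ∪ ((univ : Set (ℝ × ℝ)) ×ˢ Gᶜ) := by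
    rintro ⟨p, q⟩ hz
    obtain ⟨h1, h2, h3⟩ := hz
    by_cases hp : p ∈ G
    swap
    · exact Or.inl ⟨hp, trivial⟩
    by_cases hq : q ∈ G
    swap
    · exact Or.inr ⟨trivial, hq⟩
    exfalso
    have hp' : p.2 = 1 - p.1 := hp
    have hq' : q.2 = 1 - q.1 := hq
    simp only [mem_setOf_eq] at h1 h2 h3
    rw [hp', hq'] at h3
    linarith
  refine le_antisymm (le_trans (measure_mono hsub) ?_) (zero_le)
  calc (OmegaMeas.prod OmegaMeas) ((Gᶜ ×ˢ (univ : Set (ℝ × ℝ))) ∪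
        ((univ : Set (ℝ × ℝ)) ×ˢ Gᶜ))
      ≤ (OmegaMeas.prod OmegaMeas) (Gᶜ ×ˢ (univ : Set (ℝ × ℝ)))
        + (OmegaMeas.prod OmegaMeas) ((univ : Set (ℝ × ℝ)) ×ˢ Gᶜ) := measure_union_le _ _
    _ = 0 := by
        rw [Measure.prod_prod, Measure.prod_prod, omega_graph]
        simp

lemma entI_omega : entI OmegaMeas = 0 := by
  unfold entI
  have h2 : (OmegaMeas.prod OmegaMeas) {q : (ℝ × ℝ) × (ℝ × ℝ) |
      q.1.1 < q.2.1 ∧ q.2.1 < q.1.2 ∧ q.1.2 < q.2.2} = 0 := omega_cross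
  rw [omega_integral, h2]
  norm_num

end Omega

/-- for every subprobability `μ` on `Δ` with subuniform marginals,
`I(μ) ≥ 0`, with `I(μ) = 0` iff `μ = Ω`. -/
theorem stmt19 (μ : Measure (ℝ × ℝ))
    (hsub : μ Set.univ ≤ 1)
    (hsupp : μ Triᶜ = 0)
    (hx : ∀ a b : ℝ, a ≤ b → μ {p : ℝ × ℝ | a ≤ p.1 ∧ p.1 ≤ b} ≤ ENNReal.ofReal (b - a))
    (hy : ∀ a b : ℝ, a ≤ b → μ {p : ℝ × ℝ | a ≤ p.2 ∧ p.2 ≤ b} ≤ ENNReal.ofReal (b - a)) :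
    0 ≤ entI μ ∧ (entI μ = 0 ↔ μ = OmegaMeas) := by
  haveI hfinμ : IsFiniteMeasure μ := ⟨lt_of_le_of_lt hsub (by norm_num)⟩
  have hTri_ae : ∀ᵐ p ∂μ, p ∈ Tri := by
    rw [ae_iff]
    exact hsupp
  have hfm : AEStronglyMeasurable (fun p : ℝ × ℝ => p.2 - p.1) μ :=
    (continuous_snd.sub continuous_fst).aestronglyMeasurable
  have hpos : 0 ≤ᵐ[μ] (fun p : ℝ × ℝ => p.2 - p.1) := by
    filter_upwards [hTri_ae] with p hp
    simp only [Pi.zero_apply]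
    linarith [hp.2.1]
  have hI1eq : ∫ p : ℝ × ℝ, (p.2 - p.1) ∂μ
      = (∫⁻ p : ℝ × ℝ, ENNReal.ofReal (p.2 - p.1) ∂μ).toReal :=
    integral_eq_lintegral_of_nonneg_ae hpos hfm
  have hle : ∫⁻ p : ℝ × ℝ, ENNReal.ofReal (p.2 - p.1) ∂μ ≤ ENNReal.ofReal (1/4) :=
    lintegral_le_quarter hsupp hx hy
  have hI1le : ∫ p : ℝ × ℝ, (p.2 - p.1) ∂μ ≤ 1/4 := by
    rw [hI1eq]
    calc (∫⁻ p : ℝ × ℝ, ENNReal.ofReal (p.2 - p.1) ∂μ).toReal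
        ≤ (ENNReal.ofReal (1/4)).toReal := ENNReal.toReal_mono ENNReal.ofReal_ne_top hle
      _ = 1/4 := by rw [ENNReal.toReal_ofReal]; norm_num
  have hT2 : 0 ≤ ((μ.prod μ) {q : (ℝ × ℝ) × (ℝ × ℝ) |
      q.1.1 < q.2.1 ∧ q.2.1 < q.1.2 ∧ q.1.2 < q.2.2}).toReal := ENNReal.toReal_nonneg
  constructor
  · unfold entI
    linarith
  constructor
  · intro h0
    unfold entI at h0
    have hT0 : ((μ.prod μ) {q : (ℝ × ℝ) × (ℝ × ℝ) |
        q.1.1 < q.2.1 ∧ q.2.1 < q.1.2 ∧ q.1.2 < q.2.2}).toReal = 0 := by linarith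
    have hI : ∫ p : ℝ × ℝ, (p.2 - p.1) ∂μ = 1/4 := by linarith
    have hSfin : (μ.prod μ) {q : (ℝ × ℝ) × (ℝ × ℝ) |
        q.1.1 < q.2.1 ∧ q.2.1 < q.1.2 ∧ q.1.2 < q.2.2} ≠ ⊤ := measure_ne_top _ _
    have hS0 : (μ.prod μ) Scross = 0 := by
      rcases (ENNReal.toReal_eq_zero_iff _).mp hT0 with h | h
      · exact h
      · exact absurd h hSfin
    have hlfin : ∫⁻ p : ℝ × ℝ, ENNReal.ofReal (p.2 - p.1) ∂μ ≠ ⊤ :=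
      (lt_of_le_of_lt hle ENNReal.ofReal_lt_top).ne
    have hquarter : ∫⁻ p : ℝ × ℝ, ENNReal.ofReal (p.2 - p.1) ∂μ = ENNReal.ofReal (1/4) := by
      rw [← ENNReal.ofReal_toReal hlfin, ← hI1eq, hI]
    have hcov : ∀ᵐ t ∂(volume.restrict (Ioc (0:ℝ) 1)),
        μ (Cov t) = ENNReal.ofReal (min t (1 - t)) := by
      apply ae_eq_of_lintegral_eq (measurable_Cov μ)
        (g := fun t => ENNReal.ofReal (min t (1 - t))) (by fun_prop)
      · filter_upwards [ae_restrict_mem measurableSet_Ioc] with t ht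
        exact cov_le_min hsupp hx hy ht
      · rw [lintegral_min_quarter]
        exact ENNReal.ofReal_ne_top
      · rw [← lintegral_cov_Ioc hsupp, ← lintegral_eq_cov μ, hquarter, lintegral_min_quarter]
    have hXeq : ∀ t ∈ Icc (0:ℝ) (1/2), μ {p : ℝ × ℝ | p.1 < t} = ENNReal.ofReal t :=
      fun t ht => X_eq hsupp hx hcov ht
    have hYeq : ∀ t ∈ Icc (1/2:ℝ) 1, μ {p : ℝ × ℝ | t ≤ p.2} = ENNReal.ofReal (1 - t) :=
      fun t ht => Y_eq hsupp hy hcov ht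
    have hYlow := Ylow_null hsupp hx hcov
    have hXhigh := Xhigh_null hsupp hy hcov
    have hcorner : ∀ c : ℝ, c ∈ Ioo (0:ℝ) (1/2) → μ (CA c) = 0 ∧ μ (CB c) = 0 :=
      fun c hc => corner_null hx hy hXeq hYeq hYlow hXhigh hS0 hc
    have hgraph := graph_ae hsupp hYlow hXhigh hcorner
    exact eq_omega hsupp hx hXhigh hXeq hgraph
  · intro h
    rw [h]
    exact entI_omega
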